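/- For all n ≥ 4, the sum over k from 0 to n−4 of T_k·(T_{n−k} + T_{n−k−2} + 2·T_{n−k−3} + 3·T_{n−k−4}) equals (n−2)·T_{n−1} − T_{n−2} − 3·T_{n−3}. -/

import Mathlib

/-- The Tetranacci numbers. -/
def tetra : ℕ → ℤ
  | 0 => 0
  | 1 => 1
  | 2 => 1
  | 3 => 2
  | n + 4 => tetra (n + 3) + tetra (n + 2) + tetra (n + 1) + tetra n

/-!
Extended by zero to negative indices, `T = tetra` satisfies
`T n - T (n - 1) - T (n - 2) - T (n - 3) - T (n - 4) = [n = 1]`. Hence for any sequence `a` the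
convolution `∑ k ≤ m, T (m - k) * a k` satisfies the Tetranacci recurrence with forcing term
`a (m + 3)`. For `a j = T (j + 4) + T (j + 2) + 2 T (j + 1) + 3 T j` the closed form
`(m + 2) T (m + 3) - T (m + 2) - 3 T (m + 1)` satisfies the same forced recurrence and agrees with the
convolution for `m ≤ 3`, so the two coincide.
-/

open Finset

theorem tetra_add_four (n : ℕ) :
    tetra (n + 4) = tetra (n + 3) + tetra (n + 2) + tetra (n + 1) + tetra n :=
  rfl

theorem eq_of_tetra_recurrence {M : Type*} [Add M] {f g h : ℕ → M}
    (hf : ∀ m, f (m + 4) = f (m + 3) + f (m + 2) + f (m + 1) + f m + h m)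
    (hg : ∀ m, g (m + 4) = g (m + 3) + g (m + 2) + g (m + 1) + g m + h m)
    (h0 : f 0 = g 0) (h1 : f 1 = g 1) (h2 : f 2 = g 2) (h3 : f 3 = g 3) :
    ∀ m, f m = g m
  | 0 => h0
  | 1 => h1
  | 2 => h2
  | 3 => h3
  | m + 4 => by
    rw [hf, hg, eq_of_tetra_recurrence hf hg h0 h1 h2 h3 m,
      eq_of_tetra_recurrence hf hg h0 h1 h2 h3 (m + 1),
      eq_of_tetra_recurrence hf hg h0 h1 h2 h3 (m + 2),
      eq_of_tetra_recurrence hf hg h0 h1 h2 h3 (m + 3)]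

def tetraConv (a : ℕ → ℤ) (m : ℕ) : ℤ :=
  ∑ k ∈ range (m + 1), tetra (m - k) * a k

theorem tetraConv_add (a : ℕ → ℤ) (m j : ℕ) :
    tetraConv a (m + j) = ∑ k ∈ range (m + 1), tetra (m + j - k) * a k
      + ∑ i ∈ range j, tetra (j - 1 - i) * a (m + 1 + i) := by
  rw [tetraConv, show m + j + 1 = m + 1 + j by omega, sum_range_add]
  congr 1
  exact sum_congr rfl fun i _ => by rw [show m + j - (m + 1 + i) = j - 1 - i by omega]

theorem tetraConv_add_four (a : ℕ → ℤ) (m : ℕ) :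
    tetraConv a (m + 4) = tetraConv a (m + 3) + tetraConv a (m + 2) + tetraConv a (m + 1)
      + tetraConv a m + a (m + 3) := by
  have hsplit : ∑ k ∈ range (m + 1), tetra (m + 4 - k) * a k
      = ∑ k ∈ range (m + 1), tetra (m + 3 - k) * a k + ∑ k ∈ range (m + 1), tetra (m + 2 - k) * a k
        + ∑ k ∈ range (m + 1), tetra (m + 1 - k) * a k + tetraConv a m := by
    simp only [tetraConv, ← sum_add_distrib, ← add_mul]
    refine sum_congr rfl fun k hk => ?_
    replace hk : k ≤ m := mem_range_succ_iff.mp hk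
    rw [show m + 4 - k = m - k + 4 by omega, show m + 3 - k = m - k + 3 by omega,
      show m + 2 - k = m - k + 2 by omega, show m + 1 - k = m - k + 1 by omega, tetra_add_four]
  rw [tetraConv_add a m 4, tetraConv_add a m 3, tetraConv_add a m 2, tetraConv_add a m 1, hsplit]
  simp only [sum_range_succ, sum_range_zero]
  norm_num [tetra]
  ring

theorem tetraConv_shift_combination (m : ℕ) :
    tetraConv (fun j => tetra (j + 4) + tetra (j + 2) + 2 * tetra (j + 1) + 3 * tetra j) m
      = ((m : ℤ) + 2) * tetra (m + 3) - tetra (m + 2) - 3 * tetra (m + 1) := by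
  refine eq_of_tetra_recurrence (g := fun m : ℕ => ((m : ℤ) + 2) * tetra (m + 3) - tetra (m + 2)
    - 3 * tetra (m + 1)) (tetraConv_add_four _) (fun m => ?_) ?_ ?_ ?_ ?_ m
  · have h7 := tetra_add_four (m + 3)
    have h6 := tetra_add_four (m + 2)
    have h5 := tetra_add_four (m + 1)
    simp only [add_assoc, Nat.reduceAdd, Nat.cast_add, Nat.cast_ofNat] at h5 h6 h7 ⊢
    linear_combination ((m : ℤ) + 5) * h7 - h6 - 3 * h5
  all_goals decide

theorem tetra_convolution (n : ℕ) (hn : 4 ≤ n) :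
    ∑ k ∈ Finset.range (n - 4 + 1),
      tetra k * (tetra (n - k) + tetra (n - k - 2) + 2 * tetra (n - k - 3)
        + 3 * tetra (n - k - 4))
    = ((n : ℤ) - 2) * tetra (n - 1) - tetra (n - 2) - 3 * tetra (n - 3) := by
  obtain ⟨m, rfl⟩ : ∃ m, n = m + 4 := ⟨n - 4, by omega⟩
  rw [show m + 4 - 4 = m by omega, show m + 4 - 1 = m + 3 by omega,
    show m + 4 - 2 = m + 2 by omega, show m + 4 - 3 = m + 1 by omega,
    show ((m + 4 : ℕ) : ℤ) - 2 = m + 2 by push_cast; ring, ← tetraConv_shift_combination,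
    tetraConv, ← sum_range_reflect]
  refine sum_congr rfl fun k hk => ?_
  replace hk : k ≤ m := mem_range_succ_iff.mp hk
  rw [show m + 1 - 1 - k = m - k by omega, show m + 4 - (m - k) = k + 4 by omega,
    show k + 4 - 2 = k + 2 by omega, show k + 4 - 3 = k + 1 by omega, Nat.add_sub_cancel]
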